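/- arXiv:1809.04542 — 2 statements merged into one kernel-verified Lean document; each statement's English description precedes it below -/
import Mathlib

section
/- Define R(h) = inf_{b ∈ ℝ} ( E_Q[f*(h + b)] − b ) for bounded measurable h, where Q is a probability measure and f* the convex conjugate of a proper lsc convex f with f(1)=0, f finite near 1, f = ∞ on negatives. Then the infimum in the definition of R is attained: there exists b* ∈ ℝ with E_Q[f*(h + b*)] − b* = R(h). -/
/-!
The objective `G b = E_Q[f*(h + b)] - b` is coercive and lower semicontinuous, hence attains its
infimum on a large compact interval. Coercivity: `f` is finite at `1 ± δ`, so
`f*(s) ≥ (1 ± δ) s - c` and `G b ≥ δ |b| - K`. Lower semicontinuity: `f*` is a supremum of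
affine functions, and `f*(s) ≥ s` (from `f 1 = 0`) bounds the integrands below uniformly for `b`
near a given point, so that Fatou's lemma applies.
-/

open MeasureTheory Filter ENNReal

/-- Convex conjugate of an extended-real-valued function on ℝ. -/
noncomputable def fStar (f : ℝ → EReal) (s : ℝ) : EReal := ⨆ x : ℝ, ((s * x : ℝ) : EReal) - f x

/-- Positive part of an extended real, as an extended nonnegative real. -/
noncomputable def erealPos (x : EReal) : ℝ≥0∞ := if x = ⊤ then ⊤ else ENNReal.ofReal x.toReal

/-- Integral of an extended-real-valued function, with values in [-∞,∞]. -/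
noncomputable def eintegral {Ω : Type*} [MeasurableSpace Ω] (Q : Measure Ω) (g : Ω → EReal) : EReal :=
  ((∫⁻ x, erealPos (g x) ∂Q) : EReal) - ((∫⁻ x, erealPos (-(g x)) ∂Q) : EReal)

/-- The set B(Ω,Σ) of bounded measurable real-valued functions. -/
def BM (Ω : Type*) [MeasurableSpace Ω] : Set (Ω → ℝ) :=
  {g | Measurable g ∧ ∃ C, ∀ x, |g x| ≤ C}

/-- R(h) = inf_{b ∈ ℝ} ( E_Q[f*(h + b)] − b ). -/
noncomputable def Rfun {Ω : Type*} [MeasurableSpace Ω] (Q : Measure Ω) (f : ℝ → EReal)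
    (h : Ω → ℝ) : EReal :=
  ⨅ b : ℝ, eintegral Q (fun x => fStar f (h x + b)) - (b : EReal)

open Set Topology

lemma erealPos_eq_toENNReal : erealPos = EReal.toENNReal := rfl

section Semicontinuity

variable {X : Type*} [TopologicalSpace X]

lemma LowerSemicontinuous.add_coe {g : X → EReal} (hg : LowerSemicontinuous g) {c : X → ℝ}
    (hc : Continuous c) : LowerSemicontinuous fun x => g x + (c x : EReal) :=
  hg.add' (continuous_coe_real_ereal.comp hc).lowerSemicontinuous fun _ =>
    EReal.continuousAt_add (Or.inr (EReal.coe_ne_bot _)) (Or.inr (EReal.coe_ne_top _))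

lemma LowerSemicontinuous.sub_coe {g : X → EReal} (hg : LowerSemicontinuous g) {c : X → ℝ}
    (hc : Continuous c) : LowerSemicontinuous fun x => g x - (c x : EReal) := by
  simpa only [sub_eq_add_neg, EReal.coe_neg] using hg.add_coe (c := fun x => -c x) hc.neg

lemma IsCompact.exists_forall_le_of_lowerSemicontinuousOn {β : Type*} [LinearOrder β]
    {f : X → β} {K : Set X} (hK : IsCompact K) (hf : LowerSemicontinuousOn f K) {x₀ : X}
    (hx₀ : x₀ ∈ K) (hout : ∀ x ∉ K, f x₀ ≤ f x) : ∃ x, ∀ y, f x ≤ f y := by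
  obtain ⟨a, -, hmin⟩ := hf.exists_isMinOn ⟨x₀, hx₀⟩ hK
  refine ⟨a, fun y => ?_⟩
  by_cases hy : y ∈ K
  · exact hmin hy
  · exact (hmin hx₀).trans (hout y hy)

lemma lowerSemicontinuous_lintegral [FirstCountableTopology X] {Ω : Type*} [MeasurableSpace Ω]
    {μ : Measure Ω} {F : X → Ω → ℝ≥0∞} (hmeas : ∀ b, Measurable (F b))
    (hF : ∀ ω, LowerSemicontinuous (F · ω)) : LowerSemicontinuous fun b => ∫⁻ ω, F b ω ∂μ :=
  lowerSemicontinuous_iff_le_liminf.2 fun b =>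
    calc ∫⁻ ω, F b ω ∂μ ≤ ∫⁻ ω, liminf (F · ω) (𝓝 b) ∂μ :=
          lintegral_mono fun ω => (hF ω).le_liminf b
      _ ≤ liminf (fun b' => ∫⁻ ω, F b' ω ∂μ) (𝓝 b) := lintegral_liminf_le hmeas

end Semicontinuity

lemma LowerSemicontinuous.exists_forall_le_of_coercive {G : ℝ → EReal}
    (hG : LowerSemicontinuous G) {δ K : ℝ} (hδ : 0 < δ)
    (hcoer : ∀ b, ((δ * |b| - K : ℝ) : EReal) ≤ G b) : ∃ b, ∀ b', G b ≤ G b' := by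
  by_cases htop : ∀ b, G b = ⊤
  · exact ⟨0, fun b' => by rw [htop 0, htop b']⟩
  push Not at htop
  obtain ⟨b₀, hb₀⟩ := htop
  set c := (G b₀).toReal
  set M := max |b₀| ((c + K) / δ)
  refine (isCompact_Icc (a := -M) (b := M)).exists_forall_le_of_lowerSemicontinuousOn
    (hG.lowerSemicontinuousOn _) (abs_le.1 (le_max_left _ _)) fun b hb => ?_
  have hbig : (c + K) / δ < |b| :=
    (le_max_right _ _).trans_lt (not_le.1 fun h => hb (abs_le.1 h) : M < |b|)
  calc G b₀ ≤ c := EReal.le_coe_toReal hb₀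
    _ ≤ ((δ * |b| - K : ℝ) : EReal) := by
        rw [div_lt_iff₀ hδ] at hbig
        exact_mod_cast by linarith
    _ ≤ G b := hcoer b

section ConvexConjugate

variable {f : ℝ → EReal}

lemma lowerSemicontinuous_fStar (f : ℝ → EReal) : LowerSemicontinuous (fStar f) := by
  refine lowerSemicontinuous_iSup fun y => ?_
  induction f y with
  | bot => simpa only [EReal.sub_bot (EReal.coe_ne_bot _)] using lowerSemicontinuous_const
  | coe c =>
    exact LowerSemicontinuous.sub_coe
      (continuous_coe_real_ereal.comp (continuous_mul_const y)).lowerSemicontinuous continuous_const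
  | top => simpa only [EReal.sub_top] using lowerSemicontinuous_const

lemma coe_mul_sub_toReal_le_fStar {y : ℝ} (hy : f y ≠ ⊤) (s : ℝ) :
    ((s * y - (f y).toReal : ℝ) : EReal) ≤ fStar f s :=
  calc ((s * y - (f y).toReal : ℝ) : EReal) ≤ ((s * y : ℝ) : EReal) - f y := by
        rw [EReal.coe_sub]; exact EReal.sub_le_sub le_rfl (EReal.le_coe_toReal hy)
    _ ≤ fStar f s := le_iSup (fun y => ((s * y : ℝ) : EReal) - f y) y

lemma coe_le_fStar (h1 : f 1 = 0) (s : ℝ) : (s : EReal) ≤ fStar f s := by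
  simpa [h1] using coe_mul_sub_toReal_le_fStar (f := f) (y := 1) (by simp [h1]) s

end ConvexConjugate

section ExtendedIntegral

variable {Ω : Type*} [MeasurableSpace Ω] (Q : Measure Ω) [IsProbabilityMeasure Q]

lemma coe_le_eintegral {g : Ω → EReal} {c : ℝ} (hc : ∀ ω, (c : EReal) ≤ g ω) :
    (c : EReal) ≤ eintegral Q g := by
  have hpos : ENNReal.ofReal c ≤ ∫⁻ ω, (g ω).toENNReal ∂Q := by
    simpa using lintegral_mono (μ := Q) fun ω => EReal.toENNReal_le_toENNReal (hc ω)
  have hneg : ∫⁻ ω, (-g ω).toENNReal ∂Q ≤ ENNReal.ofReal (-c) := by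
    simpa using lintegral_mono (μ := Q) fun ω =>
      EReal.toENNReal_le_toENNReal (EReal.neg_le_neg_iff.2 (hc ω))
  calc (c : EReal)
        = ((ENNReal.ofReal c : ℝ≥0∞) : EReal) - ((ENNReal.ofReal (-c) : ℝ≥0∞) : EReal) := by
          rcases le_total 0 c with hc | hc <;> simp [hc]
    _ ≤ eintegral Q g := by
        rw [eintegral, erealPos_eq_toENNReal]
        exact EReal.sub_le_sub (EReal.coe_ennreal_le_coe_ennreal_iff.2 hpos)
          (EReal.coe_ennreal_le_coe_ennreal_iff.2 hneg)

lemma toENNReal_add_coe_add_toENNReal_neg {t : EReal} {S : ℝ} (hS : 0 ≤ S)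
    (ht : ((-S : ℝ) : EReal) ≤ t) :
    (t + S).toENNReal + (-t).toENNReal = t.toENNReal + ENNReal.ofReal S := by
  induction t with
  | bot => simp at ht
  | coe t =>
    have ht : -S ≤ t := EReal.coe_le_coe_iff.1 ht
    norm_cast
    simp only [EReal.real_coe_toENNReal]
    rcases le_total 0 t with h | h
    · rw [ENNReal.ofReal_of_nonpos (neg_nonpos.2 h), ENNReal.ofReal_add h hS, add_zero]
    · rw [ENNReal.ofReal_of_nonpos h, zero_add, ← ENNReal.ofReal_add (by linarith) (by linarith)]
      ring_nf
  | top => simp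

lemma eintegral_eq_lintegral_add_sub {g : Ω → EReal} (hg : Measurable g) {S : ℝ} (hS : 0 ≤ S)
    (hgS : ∀ ω, ((-S : ℝ) : EReal) ≤ g ω) :
    eintegral Q g = ((∫⁻ ω, (g ω + S).toENNReal ∂Q : ℝ≥0∞) : EReal) - S := by
  have hsum : ∫⁻ ω, (g ω + S).toENNReal ∂Q + ∫⁻ ω, (-g ω).toENNReal ∂Q
      = ∫⁻ ω, (g ω).toENNReal ∂Q + ENNReal.ofReal S := by
    have hmeas : Measurable fun ω => (-g ω).toENNReal :=
      EReal.continuous_toENNReal.measurable.comp hg.neg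
    rw [← lintegral_add_right _ hmeas,
      lintegral_congr fun ω => toENNReal_add_coe_add_toENNReal_neg hS (hgS ω),
      lintegral_add_right _ measurable_const, lintegral_const, measure_univ, mul_one]
  have hN : ∫⁻ ω, (-g ω).toENNReal ∂Q ≠ ⊤ := by
    refine ne_top_of_le_ne_top ENNReal.ofReal_ne_top (b := ENNReal.ofReal S) ?_
    refine (lintegral_mono (μ := Q) (g := fun _ => ENNReal.ofReal S) fun ω => ?_).trans_eq (by simp)
    exact EReal.toENNReal_le_toENNReal (EReal.neg_le.1 (by simpa using hgS ω))
  set A := ∫⁻ ω, (g ω + S).toENNReal ∂Q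
  set P := ∫⁻ ω, (g ω).toENNReal ∂Q
  set N := ∫⁻ ω, (-g ω).toENNReal ∂Q
  have hsum' : (A : EReal) + N.toReal = P + S := by
    rw [EReal.coe_ennreal_toReal hN, ← EReal.coe_ennreal_add, hsum, EReal.coe_ennreal_add,
      EReal.coe_ennreal_ofReal, max_eq_left hS]
  set n := N.toReal
  calc eintegral Q g = (P : EReal) + S - S - n := by
        rw [EReal.add_sub_cancel_right, EReal.coe_ennreal_toReal hN]; rfl
    _ = (A : EReal) + n + -(S : EReal) + -(n : EReal) := by rw [hsum']; rfl
    _ = (A : EReal) - S := by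
        rw [add_right_comm (A : EReal), ← sub_eq_add_neg, EReal.add_sub_cancel_right]; rfl

end ExtendedIntegral

noncomputable def Robjective {Ω : Type*} [MeasurableSpace Ω] (Q : Measure Ω) (f : ℝ → EReal)
    (h : Ω → ℝ) (b : ℝ) : EReal :=
  eintegral Q (fun ω => fStar f (h ω + b)) - (b : EReal)

section Objective

variable {Ω : Type*} [MeasurableSpace Ω] (Q : Measure Ω) [IsProbabilityMeasure Q] {f : ℝ → EReal}
  {h : Ω → ℝ} {C : ℝ}

lemma coe_le_Robjective {y : ℝ} (hC : ∀ ω, |h ω| ≤ C) (hy₀ : 0 ≤ y) (hy : f y ≠ ⊤) (b : ℝ) :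
    (((b - C) * y - (f y).toReal - b : ℝ) : EReal) ≤ Robjective Q f h b := by
  rw [EReal.coe_sub]
  refine EReal.sub_le_sub (coe_le_eintegral Q fun ω => ?_) le_rfl
  refine le_trans ?_ (coe_mul_sub_toReal_le_fStar hy (h ω + b))
  have : -C ≤ h ω := (abs_le.1 (hC ω)).1
  exact_mod_cast sub_le_sub_right (mul_le_mul_of_nonneg_right (by linarith) hy₀) _

lemma Robjective_coercive (hfin : ∃ ε > (0:ℝ), ∀ x : ℝ, |x - 1| < ε → f x ≠ ⊤)
    (hC : ∀ ω, |h ω| ≤ C) :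
    ∃ δ > (0:ℝ), ∃ K : ℝ, ∀ b, ((δ * |b| - K : ℝ) : EReal) ≤ Robjective Q f h b := by
  obtain ⟨ε, hε, hfinε⟩ := hfin
  set δ := min (ε / 2) (1 / 2)
  have hδ : 0 < δ := lt_min (by linarith) (by norm_num)
  have hδε : δ < ε := (min_le_left _ _).trans_lt (by linarith)
  have hδ1 : δ ≤ 1 / 2 := min_le_right _ _
  have hup : f (1 + δ) ≠ ⊤ := hfinε _ (by rwa [add_sub_cancel_left, abs_of_pos hδ])
  have hdown : f (1 - δ) ≠ ⊤ := hfinε _ (by rwa [sub_sub_cancel_left, abs_neg, abs_of_pos hδ])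
  set K := max (C * (1 + δ) + (f (1 + δ)).toReal) (C * (1 - δ) + (f (1 - δ)).toReal)
  refine ⟨δ, hδ, K, fun b => ?_⟩
  rcases le_total 0 b with hb | hb
  · refine le_trans ?_ (coe_le_Robjective Q hC (by linarith) hup b)
    rw [EReal.coe_le_coe_iff, abs_of_nonneg hb]
    linarith [le_max_left (C * (1 + δ) + (f (1 + δ)).toReal) (C * (1 - δ) + (f (1 - δ)).toReal)]
  · refine le_trans ?_ (coe_le_Robjective Q hC (by linarith) hdown b)
    rw [EReal.coe_le_coe_iff, abs_of_nonpos hb]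
    linarith [le_max_right (C * (1 + δ) + (f (1 + δ)).toReal) (C * (1 - δ) + (f (1 - δ)).toReal)]

lemma lowerSemicontinuous_Robjective (h1 : f 1 = 0) (hmeas : Measurable h)
    (hC : ∀ ω, |h ω| ≤ C) : LowerSemicontinuous (Robjective Q f h) := by
  intro b₀
  set S := |C| + |b₀| + 1
  have hS : 0 ≤ S := by positivity
  have hψ : LowerSemicontinuous fun t => (fStar f t + S).toENNReal :=
    EReal.continuous_toENNReal.comp_lowerSemicontinuous
      ((lowerSemicontinuous_fStar f).add_coe continuous_const)
      fun _ _ => EReal.toENNReal_le_toENNReal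
  set φ : ℝ → EReal := fun b =>
    ((∫⁻ ω, (fStar f (h ω + b) + S).toENNReal ∂Q : ℝ≥0∞) : EReal) - S - b
  have hφ : LowerSemicontinuous φ :=
    ((continuous_coe_ennreal_ereal.comp_lowerSemicontinuous
      (lowerSemicontinuous_lintegral (fun b => hψ.measurable.comp (hmeas.add_const b))
        fun ω => hψ.comp (continuous_const.add continuous_id))
      fun _ _ => EReal.coe_ennreal_le_coe_ennreal_iff.2).sub_coe continuous_const).sub_coe
      continuous_id
  -- near `b₀` the integrands are bounded below by `-S`, since `f*(s) ≥ s`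
  have heq : φ =ᶠ[𝓝 b₀] Robjective Q f h := by
    filter_upwards [Ioo_mem_nhds (sub_one_lt b₀) (lt_add_one b₀)] with b hb
    rw [Robjective, eintegral_eq_lintegral_add_sub Q (g := fun ω => fStar f (h ω + b))
      ((lowerSemicontinuous_fStar f).measurable.comp (hmeas.add_const b)) hS fun ω => ?_]
    refine le_trans ?_ (coe_le_fStar h1 _)
    have := (abs_le.1 ((hC ω).trans (le_abs_self C))).1
    have := neg_abs_le b₀
    exact_mod_cast (by linarith [hb.1] : -S ≤ h ω + b)
  intro y hy
  filter_upwards [hφ b₀ y (hy.trans_eq heq.eq_of_nhds.symm), heq] with b hb hbeq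
  rwa [← hbeq]

end Objective

theorem Rfun_attained_general {Ω : Type*} [MeasurableSpace Ω]
    (Q : Measure Ω) [IsProbabilityMeasure Q] (f : ℝ → EReal)
    (h1 : f 1 = 0)
    (hfin : ∃ ε > (0:ℝ), ∀ x : ℝ, |x - 1| < ε → f x ≠ ⊤)
    (h : Ω → ℝ) (hh : h ∈ BM Ω) :
    ∃ b : ℝ, eintegral Q (fun x => fStar f (h x + b)) - (b : EReal) = Rfun Q f h := by
  obtain ⟨hmeas, C, hC⟩ := hh
  obtain ⟨δ, hδ, K, hK⟩ := Robjective_coercive Q hfin hC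
  obtain ⟨b, hb⟩ :=
    (lowerSemicontinuous_Robjective Q h1 hmeas hC).exists_forall_le_of_coercive hδ hK
  exact ⟨b, le_antisymm (le_iInf hb) (iInf_le _ b)⟩

/-- The infimum in the definition of R(h) = inf_b ( E_Q[f*(h+b)] − b ) is attained. -/
theorem Rfun_attained {Ω : Type*} [MeasurableSpace Ω]
    (Q : Measure Ω) [IsProbabilityMeasure Q] (f : ℝ → EReal)
    (hlsc : LowerSemicontinuous f)
    (hconv : ∀ (x y a b : ℝ), 0 < a → 0 < b → a + b = 1 →
      f (a * x + b * y) ≤ (a : EReal) * f x + (b : EReal) * f y)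
    (hbot : ∀ x, f x ≠ ⊥) (h1 : f 1 = 0) (hneg : ∀ x : ℝ, x < 0 → f x = ⊤)
    (hfin : ∃ ε > (0:ℝ), ∀ x : ℝ, |x - 1| < ε → f x ≠ ⊤)
    (h : Ω → ℝ) (hh : h ∈ BM Ω)
    (hfinR : Rfun Q f h ≠ ⊤ ∧ Rfun Q f h ≠ ⊥) :
    ∃ b : ℝ, eintegral Q (fun x => fStar f (h x + b)) - (b : EReal) = Rfun Q f h :=
  Rfun_attained_general Q f h1 hfin h hh
end

section
/- The functional R(h) = inf_{b ∈ ℝ} ( E_Q[f*(h + b)] − b ) is lower semicontinuous on bounded measurable functions with the sup-norm topology. -/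
open MeasureTheory Filter ENNReal

/-!
Since `f = ⊤` on the negative half-line, `f*` is nondecreasing, so `R` is monotone; and
substituting `b ↦ b - c` in the infimum shows `R(h + c) = R(h) - c`. Hence `g ≥ h - ε` forces
`R(g) ≥ R(h) - ε`, so `R` is 1-Lipschitz for the sup-norm and in particular lower semicontinuous.
-/

lemma fStar_mono {f : ℝ → EReal} (hneg : ∀ x : ℝ, x < 0 → f x = ⊤) : Monotone (fStar f) := by
  intro s t hst
  refine iSup_mono fun x => ?_
  rcases lt_or_ge x 0 with hx | hx
  · simp [hneg x hx, sub_eq_add_neg]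
  · exact EReal.sub_le_sub (EReal.coe_le_coe_iff.2 (mul_le_mul_of_nonneg_right hst hx)) le_rfl

lemma eintegral_mono {Ω : Type*} [MeasurableSpace Ω] (Q : Measure Ω) {g₁ g₂ : Ω → EReal}
    (hle : ∀ x, g₁ x ≤ g₂ x) : eintegral Q g₁ ≤ eintegral Q g₂ :=
  -- `erealPos` is `EReal.toENNReal`
  EReal.sub_le_sub
    (EReal.coe_ennreal_le_coe_ennreal_iff.2 <| lintegral_mono fun x =>
      EReal.toENNReal_le_toENNReal (hle x))
    (EReal.coe_ennreal_le_coe_ennreal_iff.2 <| lintegral_mono fun x =>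
      EReal.toENNReal_le_toENNReal (EReal.neg_le_neg_iff.2 (hle x)))

lemma EReal.sub_coe_sub_coe (x : EReal) (a b : ℝ) : x - a - b = x - ((a + b : ℝ) : EReal) := by
  induction x using EReal.rec <;> norm_cast
  ring

lemma EReal.le_of_forall_pos_le_add_coe {a b : EReal} (h : ∀ ε : ℝ, 0 < ε → a ≤ b + ε) :
    a ≤ b := by
  refine EReal.le_of_forall_lt_iff_le.1 fun z hz => ?_
  obtain ⟨c, hbc, hcz⟩ := EReal.lt_iff_exists_real_btwn.1 hz
  calc a ≤ b + ((z - c : ℝ) : EReal) := h _ (by linarith [EReal.coe_lt_coe_iff.1 hcz])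
    _ ≤ c + ((z - c : ℝ) : EReal) := by gcongr
    _ = z := by norm_cast; ring

lemma Rfun_sub_le_of_sub_le {Ω : Type*} [MeasurableSpace Ω] (Q : Measure Ω) {f : ℝ → EReal}
    (hneg : ∀ x : ℝ, x < 0 → f x = ⊤) {g h : Ω → ℝ} {ε : ℝ} (hgh : ∀ x, h x - ε ≤ g x) :
    Rfun Q f h - ε ≤ Rfun Q f g := by
  refine le_iInf fun b => ?_
  have hshift : eintegral Q (fun x => fStar f (h x + (b - ε))) ≤
      eintegral Q (fun x => fStar f (g x + b)) :=
    eintegral_mono Q fun x => fStar_mono hneg (by linarith [hgh x])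
  calc Rfun Q f h - ε
      ≤ eintegral Q (fun x => fStar f (h x + (b - ε))) - ((b - ε : ℝ) : EReal) - ε :=
        EReal.sub_le_sub (iInf_le _ (b - ε)) le_rfl
    _ = eintegral Q (fun x => fStar f (h x + (b - ε))) - b := by
        rw [EReal.sub_coe_sub_coe, sub_add_cancel]
    _ ≤ eintegral Q (fun x => fStar f (g x + b)) - b := EReal.sub_le_sub hshift le_rfl

lemma le_liminf_of_tendstoUniformly {Ω ι : Type*} {F : (Ω → ℝ) → EReal}
    (hF : ∀ g h : Ω → ℝ, ∀ ε : ℝ, (∀ x, h x - ε ≤ g x) → F h - ε ≤ F g)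
    {l : Filter ι} {u : ι → Ω → ℝ} {h : Ω → ℝ} (hu : TendstoUniformly u h l) :
    F h ≤ liminf (fun i => F (u i)) l := by
  refine EReal.le_of_forall_pos_le_add_coe fun ε hε => ?_
  have hclose : ∀ᶠ i in l, F h - ε ≤ F (u i) := by
    filter_upwards [Metric.tendstoUniformly_iff.1 hu ε hε] with i hi
    refine hF _ _ _ fun x => ?_
    have := hi x
    rw [Real.dist_eq, abs_sub_lt_iff] at this
    linarith
  calc F h = F h - ε + ε := EReal.sub_add_cancel.symm
    _ ≤ liminf (fun i => F (u i)) l + ε := by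
        gcongr
        exact le_liminf_of_le (by isBoundedDefault) hclose

theorem Rfun_lowerSemicontinuous_general {Ω : Type*} [MeasurableSpace Ω]
    (Q : Measure Ω) (f : ℝ → EReal)
    (hneg : ∀ x : ℝ, x < 0 → f x = ⊤)
    (h : Ω → ℝ) (hn : ℕ → Ω → ℝ)
    (hunif : TendstoUniformly hn h atTop) :
    Rfun Q f h ≤ liminf (fun n => Rfun Q f (hn n)) atTop :=
  le_liminf_of_tendstoUniformly (fun _ _ _ => Rfun_sub_le_of_sub_le Q hneg) hunif

/-- R is lower semicontinuous on bounded measurable functions with the sup-norm topology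
(sequential formulation). -/
theorem Rfun_lowerSemicontinuous {Ω : Type*} [MeasurableSpace Ω]
    (Q : Measure Ω) [IsProbabilityMeasure Q] (f : ℝ → EReal)
    (hlsc : LowerSemicontinuous f)
    (hconv : ∀ (x y a b : ℝ), 0 < a → 0 < b → a + b = 1 →
      f (a * x + b * y) ≤ (a : EReal) * f x + (b : EReal) * f y)
    (hbot : ∀ x, f x ≠ ⊥) (h1 : f 1 = 0) (hneg : ∀ x : ℝ, x < 0 → f x = ⊤)
    (hfin : ∃ ε > (0:ℝ), ∀ x : ℝ, |x - 1| < ε → f x ≠ ⊤)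
    (h : Ω → ℝ) (hh : h ∈ BM Ω) (hn : ℕ → Ω → ℝ) (hhn : ∀ n, hn n ∈ BM Ω)
    (hunif : TendstoUniformly hn h atTop) :
    Rfun Q f h ≤ liminf (fun n => Rfun Q f (hn n)) atTop :=
  Rfun_lowerSemicontinuous_general Q f hneg h hn hunif
end
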